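/- arXiv:1912.02683 — 2 statements merged into one kernel-verified Lean document; each statement's English description precedes it below -/
import Mathlib

section
/- Let X and Y be metric spaces and let f : X → Y be a quasi-isometry, i.e. there are constants γ ≥ 1 and c ≥ 0 such that γ⁻¹·d_X(x, y) − c ≤ d_Y(f(x), f(y)) ≤ γ·d_X(x, y) + c for all x, y ∈ X, and suppose there is a constant C ≥ 0 such that every point of Y is within distance C of the image f(X). Then asdim(X) = asdim(Y). -/
/-!
A coarse embedding `f : X → Y` pulls covers back. Given a uniformly bounded cover `𝒱` of `X`,
cover `Y` by balls so large that `f` maps the `1`-thickening of each member of `𝒱` into a single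
ball, refine the balls by a uniformly bounded open cover `𝒰` of multiplicity at most `n + 1`, and
take the interiors of the preimages of the members of `𝒰`. Distinct pulled-back sets through a
point come from distinct members of `𝒰` through its image, so the multiplicity does not grow,
and effective properness keeps them uniformly bounded. Hence `asdim X ≤ asdim Y`; a
quasi-isometry with coarsely dense image has a coarse inverse, which is again a coarse
embedding, and gives the reverse inequality.
-/
noncomputable section

/-- A family of subsets is *uniformly bounded* with respect to the distance `d` if there is a
common bound on the diameters of its members. -/
def UnifBdd {X : Type*} (d : X → X → ℝ) (𝒱 : Set (Set X)) : Prop :=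
  ∃ D : ℝ, ∀ V ∈ 𝒱, ∀ x ∈ V, ∀ y ∈ V, d x y ≤ D

/-- A family of subsets is a *cover* of `X`. -/
def IsCover {X : Type*} (𝒱 : Set (Set X)) : Prop :=
  ∀ x : X, ∃ V ∈ 𝒱, x ∈ V

/-- A set is *open* with respect to the distance `d` (for a metric space with `d = dist` this is
ordinary openness). -/
def DOpen {X : Type*} (d : X → X → ℝ) (U : Set X) : Prop :=
  ∀ x ∈ U, ∃ ε > (0 : ℝ), ∀ y, d x y < ε → y ∈ U

/-- A family of subsets has *multiplicity at most `m`*: no point belongs to more than `m` of its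
members. -/
def MultLE {X : Type*} (𝒱 : Set (Set X)) (m : ℕ) : Prop :=
  ∀ x : X, ∀ F : Finset (Set X), (∀ V ∈ F, V ∈ 𝒱 ∧ x ∈ V) → F.card ≤ m

/-- `𝒰` *refines* `𝒱` if every member of `𝒰` is contained in some member of `𝒱`. -/
def Refines {X : Type*} (𝒰 𝒱 : Set (Set X)) : Prop :=
  ∀ U ∈ 𝒰, ∃ V ∈ 𝒱, U ⊆ V

/-- A family of subsets is *`r`-disjoint*: distinct members are at distance at least `r`. -/
def RDisjoint {X : Type*} (d : X → X → ℝ) (r : ℝ) (𝒱 : Set (Set X)) : Prop :=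
  ∀ V ∈ 𝒱, ∀ W ∈ 𝒱, V ≠ W → ∀ x ∈ V, ∀ y ∈ W, r ≤ d x y

/-- `X` (with distance `d`) has *asymptotic dimension at most `n`*: every uniformly bounded open
cover is refined by ... i.e. for every uniformly bounded open cover `𝒱` there is a uniformly
bounded open cover `𝒰` of multiplicity at most `n + 1` which `𝒱` refines. -/
def AsdimLE {X : Type*} (d : X → X → ℝ) (n : ℕ) : Prop :=
  ∀ 𝒱 : Set (Set X), IsCover 𝒱 → UnifBdd d 𝒱 → (∀ V ∈ 𝒱, DOpen d V) →
    ∃ 𝒰 : Set (Set X), IsCover 𝒰 ∧ UnifBdd d 𝒰 ∧ (∀ U ∈ 𝒰, DOpen d U) ∧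
      MultLE 𝒰 (n + 1) ∧ Refines 𝒱 𝒰

/-- The *asymptotic dimension* of `X` with distance `d`, as an extended natural number:
the least `n` with `AsdimLE d n`, and `⊤` if there is no such `n`. -/
def asdim {X : Type*} (d : X → X → ℝ) : ℕ∞ :=
  sInf {k : ℕ∞ | ∃ m : ℕ, k = (m : ℕ∞) ∧ AsdimLE d m}

open Set

section
variable {X Y : Type*}

theorem IsCover.of_refines {𝒱 𝒰 : Set (Set X)} (h𝒱 : IsCover 𝒱) (h : Refines 𝒱 𝒰) : IsCover 𝒰 := by
  intro x
  obtain ⟨V, hV, hxV⟩ := h𝒱 x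
  obtain ⟨U, hU, hVU⟩ := h V hV
  exact ⟨U, hU, hVU hxV⟩

theorem multLE_iff_encard_le {𝒰 : Set (Set X)} {m : ℕ} :
    MultLE 𝒰 m ↔ ∀ x, {U | U ∈ 𝒰 ∧ x ∈ U}.encard ≤ m := by
  constructor
  · intro h x
    by_contra! hlt
    obtain ⟨t, hts, ht⟩ := exists_subset_encard_eq (Order.add_one_le_of_lt hlt)
    have htfin : t.Finite := finite_of_encard_eq_coe (k := m + 1) (by simpa using ht)
    have hcard := h x htfin.toFinset (fun V hV => hts (htfin.mem_toFinset.mp hV))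
    rw [← Nat.cast_le (α := ℕ∞), ← encard_coe_eq_coe_finsetCard, htfin.coe_toFinset, ht] at hcard
    exact absurd hcard (by norm_cast; omega)
  · intro h x F hF
    have hsub : (F : Set (Set X)) ⊆ {U | U ∈ 𝒰 ∧ x ∈ U} := fun V hV => hF V hV
    exact_mod_cast (encard_coe_eq_coe_finsetCard F).symm.le.trans
      ((encard_le_encard hsub).trans (h x))

theorem MultLE.of_subset_image {𝒰 : Set (Set Y)} {𝒲 : Set (Set X)} {m : ℕ} (h : MultLE 𝒰 m)
    (f : X → Y) (g : Set Y → Set X)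
    (hsub : ∀ x, {W | W ∈ 𝒲 ∧ x ∈ W} ⊆ g '' {U | U ∈ 𝒰 ∧ f x ∈ U}) : MultLE 𝒲 m := by
  rw [multLE_iff_encard_le] at h ⊢
  exact fun x => ((encard_le_encard (hsub x)).trans (encard_image_le _ _)).trans (h (f x))

end

section
variable {X Y : Type*} [TopologicalSpace X]

/-- The empty set is added so that an empty member of a cover of `X` is refined even if `𝒰` is
empty. -/
def pullbackCover (f : X → Y) (𝒰 : Set (Set Y)) : Set (Set X) :=
  insert ∅ ((fun U => interior (f ⁻¹' U)) '' 𝒰)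

theorem isOpen_of_mem_pullbackCover {f : X → Y} {𝒰 : Set (Set Y)} {W : Set X}
    (hW : W ∈ pullbackCover f 𝒰) : IsOpen W := by
  rcases hW with rfl | ⟨U, -, rfl⟩
  exacts [isOpen_empty, isOpen_interior]

theorem multLE_pullbackCover {f : X → Y} {𝒰 : Set (Set Y)} {m : ℕ} (h : MultLE 𝒰 m) :
    MultLE (pullbackCover f 𝒰) m := by
  refine h.of_subset_image f (fun U => interior (f ⁻¹' U)) fun x W ⟨hW, hxW⟩ => ?_
  rcases hW with rfl | ⟨U, hU, rfl⟩
  exacts [absurd hxW (notMem_empty x), ⟨U, ⟨hU, interior_subset (s := f ⁻¹' U) hxW⟩, rfl⟩]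

end

section
variable {X Y : Type*} [PseudoMetricSpace X] [PseudoMetricSpace Y]

theorem dOpen_dist_iff {U : Set X} : DOpen (fun x y : X => dist x y) U ↔ IsOpen U := by
  simp only [DOpen, Metric.isOpen_iff, subset_def, Metric.mem_ball, dist_comm]

theorem isCover_range_ball {r : ℝ} (hr : 0 < r) : IsCover (range fun y : Y => Metric.ball y r) :=
  fun y => ⟨_, mem_range_self y, Metric.mem_ball_self hr⟩

theorem unifBdd_range_ball (r : ℝ) :
    UnifBdd (fun y y' : Y => dist y y') (range fun y => Metric.ball y r) := by
  refine ⟨2 * r, ?_⟩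
  rintro _ ⟨y, rfl⟩ a ha b hb
  linarith [dist_triangle_right a b y, Metric.mem_ball.mp ha, Metric.mem_ball.mp hb]

theorem dOpen_of_mem_range_ball {r : ℝ} {V : Set Y} (hV : V ∈ range fun y => Metric.ball y r) :
    DOpen (fun y y' : Y => dist y y') V := by
  obtain ⟨y, rfl⟩ := hV
  exact dOpen_dist_iff.mpr Metric.isOpen_ball

def IsBornologous (f : X → Y) : Prop :=
  ∀ R, ∃ S, ∀ x x', dist x x' ≤ R → dist (f x) (f x') ≤ S

def IsEffectivelyProper (f : X → Y) : Prop :=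
  ∀ S, ∃ R, ∀ x x', dist (f x) (f x') ≤ S → dist x x' ≤ R

structure IsCoarseEmbedding (f : X → Y) : Prop where
  isBornologous : IsBornologous f
  isEffectivelyProper : IsEffectivelyProper f

theorem IsCoarseEmbedding.of_quasiIsometric {f : X → Y} {γ c : ℝ} (hγ : 0 < γ)
    (hf : ∀ x x', γ⁻¹ * dist x x' - c ≤ dist (f x) (f x') ∧ dist (f x) (f x') ≤ γ * dist x x' + c) :
    IsCoarseEmbedding f where
  isBornologous R := ⟨γ * R + c, fun x x' h => (hf x x').2.trans (by gcongr)⟩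
  isEffectivelyProper S := ⟨γ * (S + c), fun x x' h =>
    (inv_mul_le_iff₀ hγ).mp (by linarith [(hf x x').1])⟩

theorem IsCoarseEmbedding.of_coarseRightInverse {f : X → Y} (hf : IsCoarseEmbedding f)
    {g : Y → X} {C : ℝ} (hg : ∀ y, dist y (f (g y)) ≤ C) : IsCoarseEmbedding g where
  isBornologous R := by
    obtain ⟨S, hS⟩ := hf.isEffectivelyProper (R + 2 * C)
    refine ⟨S, fun y y' h => hS _ _ ?_⟩
    linarith [dist_triangle4 (f (g y)) y y' (f (g y')), hg y, hg y', dist_comm y (f (g y))]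
  isEffectivelyProper S := by
    obtain ⟨R, hR⟩ := hf.isBornologous S
    refine ⟨R + 2 * C, fun y y' h => ?_⟩
    linarith [dist_triangle4 y (f (g y)) (f (g y')) y', hR _ _ h, hg y, hg y',
      dist_comm y' (f (g y'))]

theorem unifBdd_pullbackCover {f : X → Y} (hf : IsEffectivelyProper f) {𝒰 : Set (Set Y)}
    (h : UnifBdd (fun y y' : Y => dist y y') 𝒰) :
    UnifBdd (fun x x' : X => dist x x') (pullbackCover f 𝒰) := by
  obtain ⟨E, hE⟩ := h
  obtain ⟨R, hR⟩ := hf E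
  refine ⟨R, fun W hW x hx x' hx' => ?_⟩
  rcases hW with rfl | ⟨U, hU, rfl⟩
  · exact absurd hx (notMem_empty x)
  · exact hR x x'
      (hE U hU _ (interior_subset (s := f ⁻¹' U) hx) _ (interior_subset (s := f ⁻¹' U) hx'))

theorem refines_pullbackCover {f : X → Y} {𝒱 : Set (Set X)} {𝒰 : Set (Set Y)} {D L : ℝ}
    (h𝒱 : ∀ V ∈ 𝒱, ∀ x ∈ V, ∀ x' ∈ V, dist x x' ≤ D)
    (hL : ∀ x x', dist x x' ≤ D + 1 → dist (f x) (f x') < L)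
    (h𝒰 : Refines (range fun y => Metric.ball y L) 𝒰) : Refines 𝒱 (pullbackCover f 𝒰) := by
  intro V hV
  rcases V.eq_empty_or_nonempty with rfl | ⟨x₀, hx₀⟩
  · exact ⟨∅, mem_insert _ _, subset_rfl⟩
  obtain ⟨U, hU, hballU⟩ := h𝒰 _ ⟨f x₀, rfl⟩
  refine ⟨_, mem_insert_of_mem _ ⟨U, hU, rfl⟩, ?_⟩
  have hthick : Metric.thickening 1 V ⊆ f ⁻¹' U := by
    intro x' hx'
    obtain ⟨x, hxV, hx'x⟩ := Metric.mem_thickening_iff.mp hx'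
    apply hballU
    rw [Metric.mem_ball, dist_comm]
    apply hL
    linarith [dist_triangle x₀ x x', h𝒱 V hV x₀ hx₀ x hxV, dist_comm x' x]
  exact (Metric.self_subset_thickening one_pos V).trans
    (interior_maximal hthick Metric.isOpen_thickening)

theorem AsdimLE.of_isCoarseEmbedding {f : X → Y} (hf : IsCoarseEmbedding f) {n : ℕ}
    (h : AsdimLE (fun y y' : Y => dist y y') n) : AsdimLE (fun x x' : X => dist x x') n := by
  rintro 𝒱 h𝒱 ⟨D, hD⟩ -
  obtain ⟨S, hS⟩ := hf.isBornologous (D + 1)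
  have hL : 0 < max S 0 + 1 := by positivity
  obtain ⟨𝒰, -, h𝒰bdd, -, h𝒰mult, h𝒰ref⟩ :=
    h _ (isCover_range_ball hL) (unifBdd_range_ball _) fun _ => dOpen_of_mem_range_ball
  have href : Refines 𝒱 (pullbackCover f 𝒰) :=
    refines_pullbackCover hD (fun x x' h => (hS x x' h).trans_lt (by linarith [le_max_left S 0]))
      h𝒰ref
  exact ⟨pullbackCover f 𝒰, h𝒱.of_refines href,
    unifBdd_pullbackCover hf.isEffectivelyProper h𝒰bdd,
    fun W hW => dOpen_dist_iff.mpr (isOpen_of_mem_pullbackCover hW), multLE_pullbackCover h𝒰mult,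
    href⟩

end

theorem asdim_congr {X Y : Type*} {d : X → X → ℝ} {d' : Y → Y → ℝ}
    (h : ∀ n, AsdimLE d n ↔ AsdimLE d' n) : asdim d = asdim d' := by
  simp only [asdim, h]

theorem asdim_eq_of_quasiIsometry_general {X Y : Type*} [MetricSpace X] [MetricSpace Y] (f : X → Y)
    (γ : ℝ) (hγ : 1 ≤ γ) (c : ℝ)
    (hf : ∀ x y : X,
      γ⁻¹ * dist x y - c ≤ dist (f x) (f y) ∧ dist (f x) (f y) ≤ γ * dist x y + c)
    (C : ℝ) (hdense : ∀ y : Y, ∃ x : X, dist y (f x) ≤ C) :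
    asdim (fun x y : X => dist x y) = asdim (fun x y : Y => dist x y) := by
  have hf' : IsCoarseEmbedding f := .of_quasiIsometric (one_pos.trans_le hγ) hf
  choose g hg using hdense
  exact asdim_congr fun n =>
    ⟨fun h => h.of_isCoarseEmbedding (hf'.of_coarseRightInverse hg), .of_isCoarseEmbedding hf'⟩

/-- **Proposition.** The asymptotic dimension is a quasi-isometry invariant: if `f : X → Y`
is a quasi-isometry (with constants `γ ≥ 1`, `c ≥ 0`) whose image is coarsely dense in `Y`,
then `asdim(X) = asdim(Y)`. -/
theorem asdim_eq_of_quasiIsometry {X Y : Type*} [MetricSpace X] [MetricSpace Y] (f : X → Y)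
    (γ : ℝ) (hγ : 1 ≤ γ) (c : ℝ) (hc : 0 ≤ c)
    (hf : ∀ x y : X,
      γ⁻¹ * dist x y - c ≤ dist (f x) (f y) ∧ dist (f x) (f y) ≤ γ * dist x y + c)
    (C : ℝ) (hC : 0 ≤ C) (hdense : ∀ y : Y, ∃ x : X, dist y (f x) ≤ C) :
    asdim (fun x y : X => dist x y) = asdim (fun x y : Y => dist x y) :=
  asdim_eq_of_quasiIsometry_general f γ hγ c hf C hdense
end
end

section
/- (Finite Union Theorem) Let X be a metric space with X = A ∪ B, where A and B carry the metrics induced from X. Then asdim(X) ≤ max{asdim(A), asdim(B)}. -/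
noncomputable section

/-!
By the Bell–Dranishnikov characterisation, `AsdimLE dist n` holds iff for every `r > 0` the space
is covered by `n + 1` families of uniformly bounded, `r`-disjoint sets. Take such colourings of
`A` at scale `r` (bound `R`) and of `B` at scale `2 (R + r) + r`, and merge them colour by colour:
every `B`-set absorbs the `A`-sets of its colour that come `r`-close to it, and the other
`A`-sets are kept. The merged families still cover `A ∪ B`, are uniformly bounded, and the
larger scale of `B` keeps them `r`-disjoint.

For the characterisation itself, take a uniformly bounded cover `𝒰` of multiplicity `n + 1` with
Lebesgue number `(2n + 3) r`, and look at the depths `infEDist x Vᶜ` of the members containing a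
point `x`. One of them exceeds `(2n + 2) r`, so the at most `n` others leave one of the `n + 1`
gaps `(2jr, (2j + 1)r]` free. Sorting `x` by the set `σ` of members deeper than a free gap gives
colour classes, indexed by `#σ`, that are `r`-disjoint.
-/

open Metric Set Finset

lemma AsdimLE.mono {Y : Type*} {d : Y → Y → ℝ} {m n : ℕ} (h : AsdimLE d m) (hmn : m ≤ n) :
    AsdimLE d n := by
  intro 𝒱 hcover hbdd hopen
  obtain ⟨𝒰, hcover', hbdd', hopen', hmult, href⟩ := h 𝒱 hcover hbdd hopen
  exact ⟨𝒰, hcover', hbdd', hopen', fun x F hF => (hmult x F hF).trans (by omega), href⟩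

lemma asdim_le_of_asdimLE {Y : Type*} {d : Y → Y → ℝ} {n : ℕ} (h : AsdimLE d n) :
    asdim d ≤ n :=
  sInf_le ⟨n, rfl, h⟩

lemma asdimLE_of_asdim_le {Y : Type*} {d : Y → Y → ℝ} {n : ℕ} (h : asdim d ≤ n) :
    AsdimLE d n := by
  have hne : {k : ℕ∞ | ∃ m : ℕ, k = m ∧ AsdimLE d m}.Nonempty := by
    by_contra hempty
    rw [Set.not_nonempty_iff_eq_empty] at hempty
    simp [asdim, hempty] at h
  obtain ⟨m, hm, hdm⟩ := csInf_mem hne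
  have hmn : (m : ℕ∞) ≤ n := hm ▸ h
  exact hdm.mono (by exact_mod_cast hmn)

lemma IsOpen.dOpen {Y : Type*} [PseudoMetricSpace Y] {U : Set Y} (hU : IsOpen U) :
    DOpen (fun a b : Y => dist a b) U := fun x hx => by
  obtain ⟨ε, hε, hball⟩ := Metric.isOpen_iff.1 hU x hx
  exact ⟨ε, hε, fun y hy => hball (by rwa [mem_ball, dist_comm])⟩

lemma MultLE.finite_setOf_mem {Y : Type*} {𝒰 : Set (Set Y)} {m : ℕ} (h : MultLE 𝒰 m) (x : Y) :
    {V | V ∈ 𝒰 ∧ x ∈ V}.Finite := by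
  by_contra hinf
  obtain ⟨F, hF, hcard⟩ := Set.Infinite.exists_subset_card_eq hinf (m + 1)
  have := h x F fun V hV => hF hV
  omega

structure IsColoredCover {X : Type*} [PseudoMetricSpace X] (n : ℕ) (r R : ℝ) (S : Set X)
    (𝒲 : Fin (n + 1) → Set (Set X)) : Prop where
  rDisjoint : ∀ i, RDisjoint (fun a b : X => dist a b) r (𝒲 i)
  dist_le : ∀ i, ∀ W ∈ 𝒲 i, ∀ x ∈ W, ∀ y ∈ W, dist x y ≤ R
  covers : ∀ x ∈ S, ∃ i, ∃ W ∈ 𝒲 i, x ∈ W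

def HasColoredCovers {X : Type*} [PseudoMetricSpace X] (n : ℕ) (S : Set X) : Prop :=
  ∀ r > 0, ∃ R, ∃ 𝒲, IsColoredCover n r R S 𝒲

section ColoredCoversToAsdim

variable {Y : Type*} [PseudoMetricSpace Y]

lemma RDisjoint.eq_of_mem_thickening {𝒲 : Set (Set Y)} {s : ℝ}
    (h : RDisjoint (fun a b : Y => dist a b) (2 * s) 𝒲) {W₁ W₂ : Set Y} (h₁ : W₁ ∈ 𝒲)
    (h₂ : W₂ ∈ 𝒲) {x : Y} (hx₁ : x ∈ thickening s W₁) (hx₂ : x ∈ thickening s W₂) :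
    W₁ = W₂ := by
  by_contra hne
  obtain ⟨w₁, hw₁, hxw₁⟩ := mem_thickening_iff.1 hx₁
  obtain ⟨w₂, hw₂, hxw₂⟩ := mem_thickening_iff.1 hx₂
  have hfar : 2 * s ≤ dist w₁ w₂ := h W₁ h₁ W₂ h₂ hne w₁ hw₁ w₂ hw₂
  have := dist_triangle_left w₁ w₂ x
  linarith

/-- The `s`-thickenings of a `2s`-coloured cover, `s > D`, have multiplicity `n + 1`; `∅` is
added to refine a possibly empty member of `𝒱`. -/
theorem asdimLE_of_hasColoredCovers {n : ℕ} (h : HasColoredCovers n (univ : Set Y)) :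
    AsdimLE (fun a b : Y => dist a b) n := by
  rintro 𝒱 - ⟨D, hD⟩ -
  set s := max D 0 + 1
  have hs : 0 < s := by positivity
  have hDs : D < s := (le_max_left D 0).trans_lt (lt_add_one _)
  obtain ⟨R, 𝒲, h𝒲⟩ := h (2 * s) (by positivity)
  refine ⟨insert ∅ {U | ∃ i, ∃ W ∈ 𝒲 i, U = thickening s W}, fun x => ?_, ⟨R + 2 * s, ?_⟩,
    ?_, fun x F hF => ?_, fun V hV => ?_⟩
  · obtain ⟨i, W, hW, hxW⟩ := h𝒲.covers x (mem_univ x)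
    exact ⟨_, Or.inr ⟨i, W, hW, rfl⟩, self_subset_thickening hs W hxW⟩
  · rintro U (rfl | ⟨i, W, hW, rfl⟩) x hx y hy
    · exact absurd hx (notMem_empty x)
    obtain ⟨w, hw, hxw⟩ := mem_thickening_iff.1 hx
    obtain ⟨w', hw', hyw'⟩ := mem_thickening_iff.1 hy
    have := h𝒲.dist_le i W hW w hw w' hw'
    have := dist_triangle4 x w w' y
    rw [dist_comm w' y] at this
    show dist x y ≤ R + 2 * s
    linarith
  · rintro U (rfl | ⟨i, W, hW, rfl⟩)
    exacts [isOpen_empty.dOpen, isOpen_thickening.dOpen]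
  · refine (Finset.card_le_card_of_forall_subsingleton
      (fun U i => ∃ W ∈ 𝒲 i, U = thickening s W) (t := Finset.univ) ?_ ?_).trans (by simp)
    · intro U hU
      obtain ⟨hU𝒰, hxU⟩ := hF U hU
      rcases hU𝒰 with rfl | ⟨i, W, hW, rfl⟩
      · exact absurd hxU (notMem_empty x)
      exact ⟨i, Finset.mem_univ i, W, hW, rfl⟩
    · rintro i - U₁ ⟨hU₁, W₁, hW₁, rfl⟩ U₂ ⟨hU₂, W₂, hW₂, rfl⟩
      rw [h𝒲.rDisjoint i |>.eq_of_mem_thickening hW₁ hW₂ (hF _ hU₁).2 (hF _ hU₂).2]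
  · rcases V.eq_empty_or_nonempty with rfl | ⟨x, hxV⟩
    · exact ⟨∅, mem_insert _ _, subset_rfl⟩
    obtain ⟨i, W, hW, hxW⟩ := h𝒲.covers x (mem_univ x)
    refine ⟨thickening s W, Or.inr ⟨i, W, hW, rfl⟩, fun z hz => mem_thickening_iff.2 ⟨x, hxW, ?_⟩⟩
    exact (hD V hV z hz x hxV).trans_lt hDs

end ColoredCoversToAsdim

lemma Finset.card_add_le_card_of_antitone {α : Type*} {s : ℕ → Finset α} (hs : Antitone s)
    {n : ℕ} (h : ∀ j < n, s (2 * j + 1) ≠ s (2 * j)) : #(s (2 * n)) + n ≤ #(s 0) := by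
  induction n with
  | zero => simp
  | succ n ih =>
    have hstep : #(s (2 * n + 1)) < #(s (2 * n)) :=
      Finset.card_lt_card (ssubset_of_subset_of_ne (hs (by omega)) (h n (by omega)))
    have hle : #(s (2 * (n + 1))) ≤ #(s (2 * n + 1)) := Finset.card_le_card (hs (by omega))
    have := ih fun j hj => h j (by omega)
    omega

section AsdimToColoredCovers

variable {Y : Type*} [PseudoMetricSpace Y]

lemma mem_of_lt_infEDist_compl {x : Y} {V : Set Y} {a : ENNReal} (h : a < infEDist x Vᶜ) :
    x ∈ V := by
  by_contra hx
  rw [infEDist_zero_of_mem hx] at h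
  exact ENNReal.not_lt_zero h

lemma AsdimLE.exists_ball_subset {n : ℕ} (h : AsdimLE (fun a b : Y => dist a b) n) {L : ℝ}
    (hL : 0 < L) : ∃ 𝒰 : Set (Set Y), ∃ R : ℝ, (∀ U ∈ 𝒰, ∀ x ∈ U, ∀ y ∈ U, dist x y ≤ R) ∧
      MultLE 𝒰 (n + 1) ∧ ∀ y, ∃ U ∈ 𝒰, ball y L ⊆ U := by
  obtain ⟨𝒰, -, ⟨R, hR⟩, -, hmult, href⟩ := h (range fun y => ball y L)
    (fun y => ⟨_, mem_range_self y, mem_ball_self hL⟩)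
    ⟨2 * L, by
      rintro _ ⟨y, rfl⟩ x hx z hz
      have := dist_triangle_right x z y
      rw [mem_ball] at hx hz
      show dist x z ≤ 2 * L
      linarith⟩
    (by rintro _ ⟨y, rfl⟩; exact isOpen_ball.dOpen)
  exact ⟨𝒰, R, hR, hmult, fun y => href _ (mem_range_self y)⟩

variable (𝒰 : Set (Set Y)) (r : ℝ)

def IsAtLevel (σ : Finset (Set Y)) (j : ℕ) (x : Y) : Prop :=
  (∀ V ∈ σ, ENNReal.ofReal ((2 * j + 1) * r) < infEDist x Vᶜ) ∧
    ∀ V ∈ 𝒰, V ∉ σ → infEDist x Vᶜ ≤ ENNReal.ofReal (2 * j * r)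

variable {𝒰 r}

lemma IsAtLevel.mem {σ : Finset (Set Y)} {j : ℕ} {x : Y} (h : IsAtLevel 𝒰 r σ j x) {V : Set Y}
    (hV : V ∈ σ) : x ∈ V :=
  mem_of_lt_infEDist_compl (h.1 V hV)

lemma IsAtLevel.le_dist_of_le {σ τ : Finset (Set Y)} {j k : ℕ} {x y : Y} (hr : 0 ≤ r)
    (hx : IsAtLevel 𝒰 r σ j x) (hy : IsAtLevel 𝒰 r τ k y) (hkj : k ≤ j) {V : Set Y}
    (hV : V ∈ 𝒰) (hVσ : V ∈ σ) (hVτ : V ∉ τ) : r ≤ dist x y := by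
  by_contra! hxy
  have hdepth : infEDist x Vᶜ < ENNReal.ofReal ((2 * j + 1) * r) := calc
    infEDist x Vᶜ ≤ infEDist y Vᶜ + edist x y := infEDist_le_infEDist_add_edist
    _ < ENNReal.ofReal (2 * k * r) + ENNReal.ofReal r :=
      (add_le_add_left (hy.2 V hV hVτ) _).trans_lt
        (ENNReal.add_lt_add_left ENNReal.ofReal_ne_top (edist_lt_ofReal.2 hxy))
    _ = ENNReal.ofReal ((2 * k + 1) * r) := by rw [← ENNReal.ofReal_add (by positivity) hr]; ring_nf
    _ ≤ ENNReal.ofReal ((2 * j + 1) * r) := ENNReal.ofReal_le_ofReal (by gcongr)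
  exact (hx.1 V hVσ).not_gt hdepth

lemma IsAtLevel.le_dist {σ τ : Finset (Set Y)} (hσ : ↑σ ⊆ 𝒰) (hτ : ↑τ ⊆ 𝒰) (hcard : #σ = #τ)
    (hne : σ ≠ τ) (hr : 0 ≤ r) {j k : ℕ} {x y : Y} (hx : IsAtLevel 𝒰 r σ j x)
    (hy : IsAtLevel 𝒰 r τ k y) : r ≤ dist x y := by
  wlog hkj : k ≤ j generalizing σ τ j k x y
  · rw [dist_comm]
    exact this hτ hσ hcard.symm hne.symm hy hx (by omega)
  obtain ⟨V, hVσ, hVτ⟩ := Finset.not_subset.1 fun hsub =>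
    hne (Finset.eq_of_subset_of_card_le hsub hcard.ge)
  exact hx.le_dist_of_le hr hy hkj (hσ hVσ) hVσ hVτ

lemma exists_isAtLevel {n : ℕ} (hmult : MultLE 𝒰 (n + 1)) (hr : 0 ≤ r) {x : Y} {U : Set Y}
    (hU : U ∈ 𝒰) (hdeep : ENNReal.ofReal ((2 * (n + 1) : ℕ) * r) < infEDist x Uᶜ) :
    ∃ σ : Finset (Set Y), ↑σ ⊆ 𝒰 ∧ #σ ≠ 0 ∧ #σ ≤ n + 1 ∧ ∃ j, IsAtLevel 𝒰 r σ j x := by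
  classical
  set t := (hmult.finite_setOf_mem x).toFinset
  have hmem_t : ∀ {V}, V ∈ t ↔ V ∈ 𝒰 ∧ x ∈ V := by simp [t]
  set s : ℕ → Finset (Set Y) := fun k => t.filter fun V => ENNReal.ofReal (k * r) < infEDist x Vᶜ
  have hs : Antitone s := fun k l hkl => Finset.monotone_filter_right _ fun V _ hV =>
    (ENNReal.ofReal_le_ofReal (by gcongr)).trans_lt hV
  have hU_mem : U ∈ s (2 * (n + 1)) :=
    Finset.mem_filter.2 ⟨hmem_t.2 ⟨hU, mem_of_lt_infEDist_compl hdeep⟩, hdeep⟩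
  have hs_sub : ∀ k, ↑(s k) ⊆ 𝒰 := fun k V hV => (hmem_t.1 (Finset.mem_filter.1 hV).1).1
  have ht : #t ≤ n + 1 := hmult x t fun V hV => hmem_t.1 hV
  obtain ⟨j, hj, hgap⟩ : ∃ j < n + 1, s (2 * j + 1) = s (2 * j) := by
    by_contra! hno
    have := Finset.card_add_le_card_of_antitone hs hno
    have : #(s 0) ≤ #t := Finset.card_le_card (Finset.filter_subset _ _)
    have := Finset.card_pos.2 ⟨U, hU_mem⟩
    omega
  refine ⟨s (2 * j + 1), hs_sub _, ?_, ?_, j, fun V hV => ?_, fun V hV hVσ => ?_⟩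
  · exact Finset.card_ne_zero.2 ⟨U, hs (by omega) hU_mem⟩
  · exact (Finset.card_le_card (Finset.filter_subset _ t)).trans ht
  · exact_mod_cast (Finset.mem_filter.1 hV).2
  · by_contra! hV'
    refine hVσ (hgap ▸ Finset.mem_filter.2 ⟨hmem_t.2 ⟨hV, mem_of_lt_infEDist_compl hV'⟩, ?_⟩)
    exact_mod_cast hV'

lemma ofReal_le_infEDist_compl {x : Y} {L : ℝ} {U : Set Y} (h : ball x L ⊆ U) :
    ENNReal.ofReal L ≤ infEDist x Uᶜ :=
  le_infEDist.2 fun y hy => by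
    rw [edist_dist]
    exact ENNReal.ofReal_le_ofReal (not_lt.1 fun hxy => hy (h (mem_ball'.2 hxy)))

theorem hasColoredCovers_of_asdimLE {n : ℕ} (h : AsdimLE (fun a b : Y => dist a b) n) :
    HasColoredCovers n (univ : Set Y) := by
  intro r hr
  obtain ⟨𝒰, R, hR, hmult, hball⟩ := h.exists_ball_subset (L := (2 * n + 3) * r) (by positivity)
  refine ⟨R, fun i => {W | ∃ σ : Finset (Set Y), ↑σ ⊆ 𝒰 ∧ #σ = i + 1 ∧
    W = {x | ∃ j, IsAtLevel 𝒰 r σ j x}}, ⟨?_, ?_, ?_⟩⟩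
  · rintro i _ ⟨σ, hσ, hσi, rfl⟩ _ ⟨τ, hτ, hτi, rfl⟩ hne x ⟨j, hx⟩ y ⟨k, hy⟩
    exact IsAtLevel.le_dist hσ hτ (hσi.trans hτi.symm) (by rintro rfl; exact hne rfl) hr.le hx hy
  · rintro i _ ⟨σ, hσ, hσi, rfl⟩ x ⟨j, hx⟩ y ⟨k, hy⟩
    obtain ⟨V, hV⟩ := Finset.card_pos.1 (by omega : 0 < #σ)
    exact hR V (hσ hV) x (hx.mem hV) y (hy.mem hV)
  · rintro x -
    obtain ⟨U, hU, hxU⟩ := hball x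
    have hdeep : ENNReal.ofReal ((2 * (n + 1) : ℕ) * r) < infEDist x Uᶜ := by
      refine lt_of_lt_of_le ?_ (ofReal_le_infEDist_compl hxU)
      exact (ENNReal.ofReal_lt_ofReal_iff (by positivity)).2 (by push_cast; linarith)
    obtain ⟨σ, hσ, hσ0, hσn, j, hj⟩ := exists_isAtLevel hmult hr.le hU hdeep
    exact ⟨⟨#σ - 1, by omega⟩, _, ⟨σ, hσ, by simp only; omega, rfl⟩, j, hj⟩

end AsdimToColoredCovers

lemma HasColoredCovers.image_val {X : Type*} [PseudoMetricSpace X] {S : Set X} {n : ℕ}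
    (h : HasColoredCovers n (univ : Set S)) : HasColoredCovers n S := by
  intro r hr
  obtain ⟨R, 𝒲, h𝒲⟩ := h r hr
  refine ⟨R, fun i => image Subtype.val '' 𝒲 i, ⟨?_, ?_, ?_⟩⟩
  · rintro i _ ⟨V, hV, rfl⟩ _ ⟨W, hW, rfl⟩ hne _ ⟨v, hv, rfl⟩ _ ⟨w, hw, rfl⟩
    exact h𝒲.rDisjoint i V hV W hW (by rintro rfl; exact hne rfl) v hv w hw
  · rintro i _ ⟨W, hW, rfl⟩ _ ⟨v, hv, rfl⟩ _ ⟨w, hw, rfl⟩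
    exact h𝒲.dist_le i W hW v hv w hw
  · intro x hx
    obtain ⟨i, W, hW, hxW⟩ := h𝒲.covers ⟨x, hx⟩ (mem_univ _)
    exact ⟨i, _, mem_image_of_mem _ hW, mem_image_of_mem _ hxW⟩

section Merge

variable {X : Type*} [PseudoMetricSpace X]

def IsNear (r : ℝ) (A B : Set X) : Prop :=
  ∃ a ∈ A, ∃ b ∈ B, dist a b < r

def saturation (𝒜 : Set (Set X)) (r : ℝ) (B : Set X) : Set X :=
  B ∪ ⋃₀ {A | A ∈ 𝒜 ∧ IsNear r A B}

def merge (𝒜 ℬ : Set (Set X)) (r : ℝ) : Set (Set X) :=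
  saturation 𝒜 r '' ℬ ∪ {A | A ∈ 𝒜 ∧ ∀ B ∈ ℬ, ¬IsNear r A B}

variable {𝒜 ℬ : Set (Set X)} {r R : ℝ}

lemma exists_dist_le_of_mem_saturation (hR : ∀ A ∈ 𝒜, ∀ x ∈ A, ∀ y ∈ A, dist x y ≤ R)
    (hR₀ : 0 ≤ R) (hr : 0 ≤ r) {B : Set X} {x : X} (hx : x ∈ saturation 𝒜 r B) :
    ∃ b ∈ B, dist x b ≤ R + r := by
  rcases hx with hxB | ⟨A, ⟨hA, a, ha, b, hb, hab⟩, hxA⟩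
  · exact ⟨x, hxB, by rw [dist_self]; positivity⟩
  · have := hR A hA x hxA a ha
    have := dist_triangle x a b
    exact ⟨b, hb, by linarith⟩

lemma le_dist_of_mem_saturation (h𝒜 : RDisjoint (fun a b : X => dist a b) r 𝒜) {A B : Set X}
    (hA : A ∈ 𝒜) (hB : B ∈ ℬ) (hfree : ∀ B ∈ ℬ, ¬IsNear r A B) {x y : X}
    (hx : x ∈ saturation 𝒜 r B) (hy : y ∈ A) : r ≤ dist x y := by
  rcases hx with hxB | ⟨A', ⟨hA', hnear⟩, hxA'⟩
  · by_contra! hxy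
    exact hfree B hB ⟨y, hy, x, hxB, by rwa [dist_comm]⟩
  · have hne : A' ≠ A := by rintro rfl; exact hfree B hB hnear
    exact h𝒜 A' hA' A hA hne x hxA' y hy

lemma RDisjoint.merge (h𝒜 : RDisjoint (fun a b : X => dist a b) r 𝒜)
    (hR : ∀ A ∈ 𝒜, ∀ x ∈ A, ∀ y ∈ A, dist x y ≤ R) (hR₀ : 0 ≤ R) (hr : 0 ≤ r)
    (hℬ : RDisjoint (fun a b : X => dist a b) (2 * (R + r) + r) ℬ) :
    RDisjoint (fun a b : X => dist a b) r (merge 𝒜 ℬ r) := by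
  rintro C₁ (⟨B₁, hB₁, rfl⟩ | ⟨hA₁, hfree₁⟩) C₂ (⟨B₂, hB₂, rfl⟩ | ⟨hA₂, hfree₂⟩) hne x hx y hy
  · have hB : B₁ ≠ B₂ := by rintro rfl; exact hne rfl
    obtain ⟨b₁, hb₁, hxb₁⟩ := exists_dist_le_of_mem_saturation hR hR₀ hr hx
    obtain ⟨b₂, hb₂, hyb₂⟩ := exists_dist_le_of_mem_saturation hR hR₀ hr hy
    have hfar : 2 * (R + r) + r ≤ dist b₁ b₂ := hℬ B₁ hB₁ B₂ hB₂ hB b₁ hb₁ b₂ hb₂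
    have := dist_triangle4 b₁ x y b₂
    rw [dist_comm b₁ x] at this
    show r ≤ dist x y
    linarith
  · exact le_dist_of_mem_saturation h𝒜 hA₂ hB₁ hfree₂ hx hy
  · exact (le_dist_of_mem_saturation h𝒜 hA₁ hB₂ hfree₁ hy hx).trans_eq (dist_comm y x)
  · exact h𝒜 C₁ hA₁ C₂ hA₂ hne x hx y hy

lemma dist_le_of_mem_merge (hR : ∀ A ∈ 𝒜, ∀ x ∈ A, ∀ y ∈ A, dist x y ≤ R) (hR₀ : 0 ≤ R)
    (hr : 0 ≤ r) {R' : ℝ} (hR' : ∀ B ∈ ℬ, ∀ x ∈ B, ∀ y ∈ B, dist x y ≤ R') :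
    ∀ C ∈ merge 𝒜 ℬ r, ∀ x ∈ C, ∀ y ∈ C, dist x y ≤ max (R' + 2 * (R + r)) R := by
  rintro C (⟨B, hB, rfl⟩ | ⟨hA, -⟩) x hx y hy
  · obtain ⟨b₁, hb₁, hxb₁⟩ := exists_dist_le_of_mem_saturation hR hR₀ hr hx
    obtain ⟨b₂, hb₂, hyb₂⟩ := exists_dist_le_of_mem_saturation hR hR₀ hr hy
    have := hR' B hB b₁ hb₁ b₂ hb₂
    have := dist_triangle4 x b₁ b₂ y
    rw [dist_comm b₂ y] at this
    exact le_max_of_le_left (by linarith)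
  · exact le_max_of_le_right (hR C hA x hx y hy)

lemma exists_mem_merge {x : X} (hx : (∃ A ∈ 𝒜, x ∈ A) ∨ ∃ B ∈ ℬ, x ∈ B) :
    ∃ C ∈ merge 𝒜 ℬ r, x ∈ C := by
  rcases hx with ⟨A, hA, hxA⟩ | ⟨B, hB, hxB⟩
  · by_cases hnear : ∃ B ∈ ℬ, IsNear r A B
    · obtain ⟨B, hB, hAB⟩ := hnear
      exact ⟨_, Or.inl ⟨B, hB, rfl⟩, Or.inr ⟨A, ⟨hA, hAB⟩, hxA⟩⟩
    · exact ⟨A, Or.inr ⟨hA, fun B hB hAB => hnear ⟨B, hB, hAB⟩⟩, hxA⟩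
  · exact ⟨_, Or.inl ⟨B, hB, rfl⟩, Or.inl hxB⟩

theorem HasColoredCovers.union {S T : Set X} {n : ℕ} (hS : HasColoredCovers n S)
    (hT : HasColoredCovers n T) : HasColoredCovers n (S ∪ T) := by
  intro r hr
  obtain ⟨R₁, 𝒜, h𝒜⟩ := hS r hr
  set R := max R₁ 0
  have hR : ∀ i, ∀ A ∈ 𝒜 i, ∀ x ∈ A, ∀ y ∈ A, dist x y ≤ R :=
    fun i A hA x hx y hy => (h𝒜.dist_le i A hA x hx y hy).trans (le_max_left _ _)
  have hR₀ : 0 ≤ R := le_max_right _ _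
  obtain ⟨R₂, ℬ, hℬ⟩ := hT (2 * (R + r) + r) (by positivity)
  refine ⟨max (R₂ + 2 * (R + r)) R, fun i => merge (𝒜 i) (ℬ i) r,
    ⟨fun i => (h𝒜.rDisjoint i).merge (hR i) hR₀ hr.le (hℬ.rDisjoint i),
      fun i => dist_le_of_mem_merge (hR i) hR₀ hr.le (hℬ.dist_le i), ?_⟩⟩
  rintro x (hx | hx)
  · obtain ⟨i, hi⟩ := h𝒜.covers x hx
    exact ⟨i, exists_mem_merge (Or.inl hi)⟩
  · obtain ⟨i, hi⟩ := hℬ.covers x hx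
    exact ⟨i, exists_mem_merge (Or.inr hi)⟩

end Merge

/-- **Finite Union Theorem.** If `X = A ∪ B` (with `A`, `B` carrying the induced metrics),
then `asdim(X) ≤ max {asdim(A), asdim(B)}`. -/
theorem asdim_union_le {X : Type*} [MetricSpace X] (A B : Set X) (hAB : A ∪ B = Set.univ) :
    asdim (fun x y : X => dist x y) ≤
      max (asdim (fun a b : A => dist (a : X) (b : X)))
        (asdim (fun a b : B => dist (a : X) (b : X))) := by
  by_cases htop : max (asdim fun a b : A => dist (a : X) (b : X))
      (asdim fun a b : B => dist (a : X) (b : X)) = ⊤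
  · exact htop ▸ le_top
  obtain ⟨n, hn⟩ := ENat.ne_top_iff_exists.1 htop
  have hA : AsdimLE (fun a b : A => dist (a : X) (b : X)) n :=
    asdimLE_of_asdim_le (hn ▸ le_max_left _ _)
  have hB : AsdimLE (fun a b : B => dist (a : X) (b : X)) n :=
    asdimLE_of_asdim_le (hn ▸ le_max_right _ _)
  rw [← hn]
  refine asdim_le_of_asdimLE (asdimLE_of_hasColoredCovers ?_)
  rw [← hAB]
  exact (hasColoredCovers_of_asdimLE hA).image_val.union (hasColoredCovers_of_asdimLE hB).image_val
end
end
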